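/- arXiv:2106.02237 — 6 statements merged into one kernel-verified Lean document; each statement's English description precedes it below -/
import Mathlib

section
/- For every t ≥ 1 with ε_t ≠ 0, the MAMP LMLE output satisfies r_t = (1/ε_t)(F_t y + Σ_{i=1}^{t} H_{t,i} x_i), for arbitrary vectors y ∈ ℂ^M and x_1, …, x_t ∈ ℂ^N. -/
open Matrix Finset

/-! Unrolling the memory recursion gives `r̂_t = ∑ᵢ ϑ_{t,i} Bᵗ⁻ⁱ (y - A xᵢ)`, since `ϑ_{t,i}` is
exactly the product of coefficients collected by the `i`-th input on its way to step `t`. Applying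
`Aᴴ` and adding `p_{t,i} xᵢ = ϑ_{t,i} w_{t-i} xᵢ`, the `i`-th summand splits into
`ϑ_{t,i} Aᴴ Bᵗ⁻ⁱ y` and `ϑ_{t,i} (w_{t-i} I - W_{t-i}) xᵢ`. -/

theorem Module.End.eq_sum_pow_apply_of_recurrence {R V : Type*} [CommSemiring R]
    [AddCommMonoid V] [Module R V] (f : Module.End R V) (θ ξ : ℕ → R) (u r : ℕ → V) (h0 : r 0 = 0)
    (hrec : ∀ t, r (t + 1) = θ (t + 1) • f (r t) + ξ (t + 1) • u (t + 1)) (t : ℕ) :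
    r t = ∑ i ∈ Icc 1 t, (ξ i * ∏ τ ∈ Icc (i + 1) t, θ τ) • (f ^ (t - i)) (u i) := by
  induction t with
  | zero => simp [h0]
  | succ t ih =>
    have hprod : ∀ i ∈ Icc 1 t, ∏ τ ∈ Icc (i + 1) (t + 1), θ τ
        = θ (t + 1) * ∏ τ ∈ Icc (i + 1) t, θ τ := fun i hi => by
      rw [prod_Icc_succ_top (by simp at hi; omega), mul_comm]
    have hpow : ∀ i ∈ Icc 1 t, f ^ (t + 1 - i) = f * f ^ (t - i) := fun i hi => by
      rw [← pow_succ', Nat.sub_add_comm (by simp at hi; omega)]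
    rw [hrec, ih, sum_Icc_succ_top (by omega), map_sum, smul_sum, Nat.sub_self,
      Icc_eq_empty_of_lt (Nat.lt_succ_self _), prod_empty, mul_one, pow_zero, Module.End.one_apply]
    congr 1
    refine sum_congr rfl fun i hi => ?_
    rw [hprod i hi, hpow i hi, Module.End.mul_apply, map_smul, smul_smul, mul_left_comm]

theorem mulVec_smul_pow_mulVec_sub_add {R m n : Type*} [CommRing R] [Fintype m] [Fintype n]
    [DecidableEq m] [DecidableEq n] (A : Matrix m n R) (B : Matrix m m R) (C : Matrix n m R)
    (c w : R) (k : ℕ) (y : m → R) (x : n → R) :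
    C *ᵥ (c • (B ^ k *ᵥ (y - A *ᵥ x))) + (c * w) • x
      = (c • (C * B ^ k)) *ᵥ y + (c • (w • (1 : Matrix n n R) - C * B ^ k * A)) *ᵥ x := by
  simp only [mulVec_smul, smul_mulVec, mulVec_sub, sub_mulVec, mulVec_mulVec, one_mulVec,
    smul_sub, smul_smul, Matrix.mul_assoc]
  abel

theorem mamp_lmle_closed_form_general
    (M N : ℕ)
    (A : Matrix (Fin M) (Fin N) ℂ)
    (B : Matrix (Fin M) (Fin M) ℂ)
    (W : ℕ → Matrix (Fin N) (Fin N) ℂ) (hW : ∀ t, W t = Aᴴ * B ^ t * A)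
    (w : ℕ → ℂ)
    (θ ξ : ℕ → ℝ)
    (ϑ : ℕ → ℕ → ℝ)
    (hϑ : ∀ t i, 1 ≤ i → i ≤ t → ϑ t i = ξ i * ∏ τ ∈ Finset.Icc (i + 1) t, θ τ)
    (p : ℕ → ℕ → ℂ)
    (hp : ∀ t i, 1 ≤ i → i ≤ t → p t i = (ϑ t i : ℂ) * w (t - i))
    (ε : ℕ → ℂ)
    (F : ℕ → Matrix (Fin N) (Fin M) ℂ)
    (hF : ∀ t, 1 ≤ t → F t = ∑ i ∈ Finset.Icc 1 t, (ϑ t i : ℂ) • (Aᴴ * B ^ (t - i)))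
    (H : ℕ → ℕ → Matrix (Fin N) (Fin N) ℂ)
    (hH : ∀ t i, 1 ≤ i → i ≤ t →
      H t i = (ϑ t i : ℂ) • (w (t - i) • (1 : Matrix (Fin N) (Fin N) ℂ) - W (t - i)))
    (y : Fin M → ℂ) (x : ℕ → Fin N → ℂ)
    (rhat : ℕ → Fin M → ℂ)
    (h0 : rhat 0 = 0)
    (hrec : ∀ t, 1 ≤ t →
      rhat t = (θ t : ℂ) • (B *ᵥ rhat (t - 1)) + (ξ t : ℂ) • (y - A *ᵥ x t))
    (r : ℕ → Fin N → ℂ)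
    (hr : ∀ t, 1 ≤ t → ε t ≠ 0 →
      r t = (ε t)⁻¹ • (Aᴴ *ᵥ rhat t + ∑ i ∈ Finset.Icc 1 t, p t i • x i))
    (t : ℕ) (ht : 1 ≤ t) (hεt : ε t ≠ 0) :
    r t = (ε t)⁻¹ • ((F t) *ᵥ y + ∑ i ∈ Finset.Icc 1 t, (H t i) *ᵥ x i) := by
  have hrhat : rhat t = ∑ i ∈ Icc 1 t, (ϑ t i : ℂ) • (B ^ (t - i) *ᵥ (y - A *ᵥ x i)) := by
    rw [Module.End.eq_sum_pow_apply_of_recurrence (toLin' B) (fun t => (θ t : ℂ))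
      (fun t => (ξ t : ℂ)) (fun i => y - A *ᵥ x i) rhat h0
      fun s => by simpa using hrec (s + 1) (by omega)]
    refine sum_congr rfl fun i hi => ?_
    rw [mem_Icc] at hi
    rw [hϑ t i hi.1 hi.2, ← toLin'_pow, toLin'_apply]
    push_cast
    rfl
  rw [hr t ht hεt, hrhat, hF t ht, mulVec_sum, sum_mulVec, ← sum_add_distrib, ← sum_add_distrib]
  congr 1
  refine sum_congr rfl fun i hi => ?_
  rw [mem_Icc] at hi
  rw [hp t i hi.1 hi.2, hH t i hi.1 hi.2, hW, mulVec_smul_pow_mulVec_sub_add]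

/-- for every `t ≥ 1` with `ε_t ≠ 0`, the MAMP LMLE output satisfies
`r_t = (1/ε_t)(F_t y + ∑_{i=1}^t H_{t,i} x_i)`. -/
theorem mamp_lmle_closed_form
    (M N : ℕ) (hM : 0 < M) (hN : 0 < N)
    (A : Matrix (Fin M) (Fin N) ℂ) (lamd : ℝ)
    (B : Matrix (Fin M) (Fin M) ℂ)
    (hB : B = (lamd : ℂ) • (1 : Matrix (Fin M) (Fin M) ℂ) - A * Aᴴ)
    (W : ℕ → Matrix (Fin N) (Fin N) ℂ) (hW : ∀ t, W t = Aᴴ * B ^ t * A)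
    (w : ℕ → ℂ) (hw : ∀ t, w t = (N : ℂ)⁻¹ * (W t).trace)
    (θ ξ : ℕ → ℝ)
    (ϑ : ℕ → ℕ → ℝ)
    (hϑ : ∀ t i, 1 ≤ i → i ≤ t → ϑ t i = ξ i * ∏ τ ∈ Finset.Icc (i + 1) t, θ τ)
    (p : ℕ → ℕ → ℂ)
    (hp : ∀ t i, 1 ≤ i → i ≤ t → p t i = (ϑ t i : ℂ) * w (t - i))
    (ε : ℕ → ℂ) (hε : ∀ t, 1 ≤ t → ε t = ∑ i ∈ Finset.Icc 1 t, p t i)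
    (F : ℕ → Matrix (Fin N) (Fin M) ℂ)
    (hF : ∀ t, 1 ≤ t → F t = ∑ i ∈ Finset.Icc 1 t, (ϑ t i : ℂ) • (Aᴴ * B ^ (t - i)))
    (H : ℕ → ℕ → Matrix (Fin N) (Fin N) ℂ)
    (hH : ∀ t i, 1 ≤ i → i ≤ t →
      H t i = (ϑ t i : ℂ) • (w (t - i) • (1 : Matrix (Fin N) (Fin N) ℂ) - W (t - i)))
    (y : Fin M → ℂ) (x : ℕ → Fin N → ℂ)
    (rhat : ℕ → Fin M → ℂ)
    (h0 : rhat 0 = 0)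
    (hrec : ∀ t, 1 ≤ t →
      rhat t = (θ t : ℂ) • (B *ᵥ rhat (t - 1)) + (ξ t : ℂ) • (y - A *ᵥ x t))
    (r : ℕ → Fin N → ℂ)
    (hr : ∀ t, 1 ≤ t → ε t ≠ 0 →
      r t = (ε t)⁻¹ • (Aᴴ *ᵥ rhat t + ∑ i ∈ Finset.Icc 1 t, p t i • x i))
    (t : ℕ) (ht : 1 ≤ t) (hεt : ε t ≠ 0) :
    r t = (ε t)⁻¹ • ((F t) *ᵥ y + ∑ i ∈ Finset.Icc 1 t, (H t i) *ᵥ x i) :=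
  mamp_lmle_closed_form_general M N A B W hW w θ ξ ϑ hϑ p hp ε F hF H hH y x rhat h0 hrec r hr t ht
    hεt
end

section
/- Suppose y = A x + n with x ∈ ℂ^N, n ∈ ℂ^M, and x_i = x + f_i for vectors f_1, …, f_t ∈ ℂ^N. Then for every t ≥ 1 with ε_t ≠ 0, the MAMP LMLE output satisfies r_t = x + g_t where the estimation error is g_t = (1/ε_t)(F_t n + Σ_{i=1}^{t} H_{t,i} f_i). -/
/-!
Unrolling the memory recursion gives `r̂_t = ∑ᵢ ϑ_{t,i} Bᵗ⁻ⁱ (y - A xᵢ)`, and `y - A xᵢ = n - A fᵢ`.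
Hence `Aᴴ r̂_t = F_t n - ∑ᵢ ϑ_{t,i} W_{t-i} fᵢ`, while `∑ᵢ p_{t,i} xᵢ = ε_t x + ∑ᵢ ϑ_{t,i} w_{t-i} fᵢ`;
the two `fᵢ` contributions combine into `∑ᵢ H_{t,i} fᵢ`, and dividing by `ε_t` leaves `x + g_t`.
-/

open Matrix Finset

section

variable {R m n : Type*} [CommRing R] [Fintype m] [Fintype n] [DecidableEq n]

theorem eq_sum_pow_mulVec_of_recurrence [DecidableEq m] (B : Matrix m m R) (θ ξ : ℕ → R)
    (e v : ℕ → m → R) (h0 : v 0 = 0)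
    (hrec : ∀ t, v (t + 1) = θ (t + 1) • (B *ᵥ v t) + ξ (t + 1) • e (t + 1)) (t : ℕ) :
    v t = ∑ i ∈ Icc 1 t, (ξ i * ∏ τ ∈ Icc (i + 1) t, θ τ) • (B ^ (t - i) *ᵥ e i) := by
  induction t with
  | zero => simp [h0]
  | succ t ih =>
    rw [hrec, ih, sum_Icc_succ_top (by omega), mulVec_sum, smul_sum]
    congr 1
    · refine sum_congr rfl fun i hi => ?_
      have hit : i ≤ t := (mem_Icc.mp hi).2
      rw [prod_Icc_succ_top (by omega), Nat.sub_add_comm hit, pow_succ', ← mulVec_mulVec,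
        mulVec_smul, smul_smul]
      ring_nf
    · simp

theorem lmle_summand_decomposition (A : Matrix m n R) (C : Matrix n m R)
    (P : Matrix m m R) (c w : R) (x f : n → R) (noise : m → R) :
    C *ᵥ (c • (P *ᵥ (noise - A *ᵥ f))) + (c * w) • (x + f)
      = (c * w) • x +
        ((c • (C * P)) *ᵥ noise + (c • (w • (1 : Matrix n n R) - C * P * A)) *ᵥ f) := by
  simp only [mulVec_smul, mulVec_sub, mulVec_mulVec, smul_mulVec, sub_mulVec, one_mulVec,
    Matrix.mul_assoc]
  module

end

theorem mamp_lmle_error_decomposition_general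
    (M N : ℕ)
    (A : Matrix (Fin M) (Fin N) ℂ)
    (B : Matrix (Fin M) (Fin M) ℂ)
    (W : ℕ → Matrix (Fin N) (Fin N) ℂ) (hW : ∀ t, W t = Aᴴ * B ^ t * A)
    (w : ℕ → ℂ)
    (θ ξ : ℕ → ℝ)
    (ϑ : ℕ → ℕ → ℝ)
    (hϑ : ∀ t i, 1 ≤ i → i ≤ t → ϑ t i = ξ i * ∏ τ ∈ Finset.Icc (i + 1) t, θ τ)
    (p : ℕ → ℕ → ℂ)
    (hp : ∀ t i, 1 ≤ i → i ≤ t → p t i = (ϑ t i : ℂ) * w (t - i))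
    (ε : ℕ → ℂ) (hε : ∀ t, 1 ≤ t → ε t = ∑ i ∈ Finset.Icc 1 t, p t i)
    (F : ℕ → Matrix (Fin N) (Fin M) ℂ)
    (hF : ∀ t, 1 ≤ t → F t = ∑ i ∈ Finset.Icc 1 t, (ϑ t i : ℂ) • (Aᴴ * B ^ (t - i)))
    (H : ℕ → ℕ → Matrix (Fin N) (Fin N) ℂ)
    (hH : ∀ t i, 1 ≤ i → i ≤ t →
      H t i = (ϑ t i : ℂ) • (w (t - i) • (1 : Matrix (Fin N) (Fin N) ℂ) - W (t - i)))
    (xtrue : Fin N → ℂ) (n : Fin M → ℂ) (y : Fin M → ℂ)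
    (hy : y = A *ᵥ xtrue + n)
    (f : ℕ → Fin N → ℂ) (x : ℕ → Fin N → ℂ)
    (hx : ∀ i, x i = xtrue + f i)
    (rhat : ℕ → Fin M → ℂ)
    (h0 : rhat 0 = 0)
    (hrec : ∀ t, 1 ≤ t →
      rhat t = (θ t : ℂ) • (B *ᵥ rhat (t - 1)) + (ξ t : ℂ) • (y - A *ᵥ x t))
    (r : ℕ → Fin N → ℂ)
    (hr : ∀ t, 1 ≤ t → ε t ≠ 0 →
      r t = (ε t)⁻¹ • (Aᴴ *ᵥ rhat t + ∑ i ∈ Finset.Icc 1 t, p t i • x i))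
    (t : ℕ) (ht : 1 ≤ t) (hεt : ε t ≠ 0) :
    r t = xtrue + (ε t)⁻¹ • ((F t) *ᵥ n + ∑ i ∈ Finset.Icc 1 t, (H t i) *ᵥ f i) := by
  have hrhat : rhat t = ∑ i ∈ Icc 1 t, (ϑ t i : ℂ) • (B ^ (t - i) *ᵥ (n - A *ᵥ f i)) := by
    rw [eq_sum_pow_mulVec_of_recurrence B (fun s ↦ (θ s : ℂ)) (fun s ↦ (ξ s : ℂ))
      (fun s ↦ y - A *ᵥ x s) rhat h0 (fun s ↦ by simpa using hrec (s + 1) (by omega)) t]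
    refine sum_congr rfl fun i hi => ?_
    obtain ⟨h1, h2⟩ := mem_Icc.mp hi
    have hresidual : y - A *ᵥ x i = n - A *ᵥ f i := by
      rw [hy, hx i, mulVec_add]
      abel
    rw [hϑ t i h1 h2, hresidual]
    push_cast
    rfl
  have hcomb : Aᴴ *ᵥ rhat t + ∑ i ∈ Icc 1 t, p t i • x i
      = ε t • xtrue + (F t *ᵥ n + ∑ i ∈ Icc 1 t, H t i *ᵥ f i) := by
    rw [hrhat, mulVec_sum, hF t ht, sum_mulVec, hε t ht, sum_smul, ← sum_add_distrib,
      ← sum_add_distrib, ← sum_add_distrib]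
    refine sum_congr rfl fun i hi => ?_
    obtain ⟨h1, h2⟩ := mem_Icc.mp hi
    rw [hp t i h1 h2, hH t i h1 h2, hW, hx i]
    exact lmle_summand_decomposition A Aᴴ _ _ _ _ _ _
  rw [hr t ht hεt, hcomb, smul_add, inv_smul_smul₀ hεt]

/-- if `y = A x + n` and `x_i = x + f_i`, then for every `t ≥ 1` with
`ε_t ≠ 0` the MAMP LMLE output satisfies `r_t = x + g_t` with
`g_t = (1/ε_t)(F_t n + ∑_{i=1}^t H_{t,i} f_i)`. -/
theorem mamp_lmle_error_decomposition
    (M N : ℕ) (hM : 0 < M) (hN : 0 < N)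
    (A : Matrix (Fin M) (Fin N) ℂ) (lamd : ℝ)
    (B : Matrix (Fin M) (Fin M) ℂ)
    (hB : B = (lamd : ℂ) • (1 : Matrix (Fin M) (Fin M) ℂ) - A * Aᴴ)
    (W : ℕ → Matrix (Fin N) (Fin N) ℂ) (hW : ∀ t, W t = Aᴴ * B ^ t * A)
    (w : ℕ → ℂ) (hw : ∀ t, w t = (N : ℂ)⁻¹ * (W t).trace)
    (θ ξ : ℕ → ℝ)
    (ϑ : ℕ → ℕ → ℝ)
    (hϑ : ∀ t i, 1 ≤ i → i ≤ t → ϑ t i = ξ i * ∏ τ ∈ Finset.Icc (i + 1) t, θ τ)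
    (p : ℕ → ℕ → ℂ)
    (hp : ∀ t i, 1 ≤ i → i ≤ t → p t i = (ϑ t i : ℂ) * w (t - i))
    (ε : ℕ → ℂ) (hε : ∀ t, 1 ≤ t → ε t = ∑ i ∈ Finset.Icc 1 t, p t i)
    (F : ℕ → Matrix (Fin N) (Fin M) ℂ)
    (hF : ∀ t, 1 ≤ t → F t = ∑ i ∈ Finset.Icc 1 t, (ϑ t i : ℂ) • (Aᴴ * B ^ (t - i)))
    (H : ℕ → ℕ → Matrix (Fin N) (Fin N) ℂ)
    (hH : ∀ t i, 1 ≤ i → i ≤ t →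
      H t i = (ϑ t i : ℂ) • (w (t - i) • (1 : Matrix (Fin N) (Fin N) ℂ) - W (t - i)))
    (xtrue : Fin N → ℂ) (n : Fin M → ℂ) (y : Fin M → ℂ)
    (hy : y = A *ᵥ xtrue + n)
    (f : ℕ → Fin N → ℂ) (x : ℕ → Fin N → ℂ)
    (hx : ∀ i, x i = xtrue + f i)
    (rhat : ℕ → Fin M → ℂ)
    (h0 : rhat 0 = 0)
    (hrec : ∀ t, 1 ≤ t →
      rhat t = (θ t : ℂ) • (B *ᵥ rhat (t - 1)) + (ξ t : ℂ) • (y - A *ᵥ x t))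
    (r : ℕ → Fin N → ℂ)
    (hr : ∀ t, 1 ≤ t → ε t ≠ 0 →
      r t = (ε t)⁻¹ • (Aᴴ *ᵥ rhat t + ∑ i ∈ Finset.Icc 1 t, p t i • x i))
    (t : ℕ) (ht : 1 ≤ t) (hεt : ε t ≠ 0) :
    r t = xtrue + (ε t)⁻¹ • ((F t) *ᵥ n + ∑ i ∈ Finset.Icc 1 t, (H t i) *ᵥ f i) :=
  mamp_lmle_error_decomposition_general M N A B W hW w θ ξ ϑ hϑ p hp ε hε F hF H hH xtrue n y hy f x
    hx rhat h0 hrec r hr t ht hεt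
end

section
/- Let 0 ≤ a ≤ b and ρ > 0 be real numbers, and define h(c) = max(c − a, b − c)/(c + ρ) for c > −ρ. Then for every c > −ρ one has h(c) ≥ (b − a)/(a + b + 2ρ), with equality at c = (a + b)/2. In other words, the midpoint c = (a+b)/2 minimizes the worst-case ratio max_{μ ∈ [a,b]} |c − μ|/(c + ρ), whose minimal value is (b − a)/(a + b + 2ρ). -/
/-! Writing `m = (a + b) / 2`, the worst-case deviation is `max (c - a) (b - c) = (b - a) / 2 + |c - m|`.
Moving `c` a distance `d` away from `m` thus adds `d` to the numerator and at most `d` to the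
denominator `c + ρ`; since the ratio at the midpoint is at most `1` (this is `a + ρ ≥ 0`), that can
only increase the ratio. -/

section LinearOrderedField

variable {K : Type*} [Field K] [LinearOrder K] [IsStrictOrderedRing K]

theorem max_sub_sub_eq_half_sub_add_abs (a b c : K) :
    max (c - a) (b - c) = (b - a) / 2 + |c - (a + b) / 2| := by
  rcases le_total c ((a + b) / 2) with hc | hc
  · rw [abs_of_nonpos (sub_nonpos.2 hc), max_eq_right (by linarith)]
    ring
  · rw [abs_of_nonneg (sub_nonneg.2 hc), max_eq_left (by linarith)]
    ring

theorem div_le_add_div_add {r M d : K} (hrM : r ≤ M) (hM : 0 < M) (hd : 0 ≤ d) :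
    r / M ≤ (r + d) / (M + d) := by
  rw [div_le_div_iff₀ hM (by positivity)]
  nlinarith

theorem max_sub_sub_div_at_midpoint (a b ρ : K) :
    max ((a + b) / 2 - a) (b - (a + b) / 2) / ((a + b) / 2 + ρ) = (b - a) / (a + b + 2 * ρ) := by
  rw [max_sub_sub_eq_half_sub_add_abs, sub_self, abs_zero, add_zero,
    show (a + b) / 2 + ρ = (a + b + 2 * ρ) / 2 by ring, div_div_div_cancel_right₀ two_ne_zero]

theorem max_sub_sub_div_at_midpoint_le {a b ρ c : K} (hab : a ≤ b) (haρ : 0 < a + ρ)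
    (hc : 0 < c + ρ) :
    max ((a + b) / 2 - a) (b - (a + b) / 2) / ((a + b) / 2 + ρ)
      ≤ max (c - a) (b - c) / (c + ρ) := by
  have hd : 0 ≤ |c - (a + b) / 2| := abs_nonneg _
  calc max ((a + b) / 2 - a) (b - (a + b) / 2) / ((a + b) / 2 + ρ)
      = (b - a) / 2 / ((a + b) / 2 + ρ) := by
        rw [max_sub_sub_eq_half_sub_add_abs, sub_self, abs_zero, add_zero]
    _ ≤ ((b - a) / 2 + |c - (a + b) / 2|) / ((a + b) / 2 + ρ + |c - (a + b) / 2|) :=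
        div_le_add_div_add (by linarith) (by linarith) hd
    _ ≤ ((b - a) / 2 + |c - (a + b) / 2|) / (c + ρ) :=
        div_le_div_of_nonneg_left (by linarith) hc
          (by linarith [le_abs_self (c - (a + b) / 2)])
    _ = max (c - a) (b - c) / (c + ρ) := by rw [max_sub_sub_eq_half_sub_add_abs]

end LinearOrderedField

/-- for `0 ≤ a ≤ b`, `ρ > 0` and `h(c) = max(c - a, b - c)/(c + ρ)`,
every `c > -ρ` satisfies `h(c) ≥ (b - a)/(a + b + 2ρ)`, with equality at
`c = (a + b)/2`. -/
theorem midpoint_minimizes_worst_case_ratio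
    (a b ρ : ℝ) (ha : 0 ≤ a) (hab : a ≤ b) (hρ : 0 < ρ) :
    (∀ c : ℝ, -ρ < c →
      (b - a) / (a + b + 2 * ρ) ≤ max (c - a) (b - c) / (c + ρ)) ∧
    max ((a + b) / 2 - a) (b - (a + b) / 2) / ((a + b) / 2 + ρ)
      = (b - a) / (a + b + 2 * ρ) := by
  refine ⟨fun c hc => ?_, max_sub_sub_div_at_midpoint a b ρ⟩
  rw [← max_sub_sub_div_at_midpoint a b ρ]
  exact max_sub_sub_div_at_midpoint_le hab (by linarith) (by linarith)
end

section
/- Let V ∈ ℝ^{L×L} be a symmetric positive definite matrix and 1 ∈ ℝ^L the all-ones vector. Then for every index i, 1/(1ᵀ V^{−1} 1) ≤ V_{ii}. In particular, the minimal constrained variance min{ζᵀ V ζ : 1ᵀ ζ = 1} never exceeds any diagonal entry of V, so the MSE of the optimally damped output is not worse than the MSE of any single preceding estimate. -/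
/-!
The quadratic `t ↦ (x - t V⁻¹y)ᵀ V (x - t V⁻¹y) = xᵀVx - 2t xᵀy + t² yᵀV⁻¹y` is nonnegative, so
its discriminant is nonpositive: `(xᵀy)² ≤ (xᵀVx)(yᵀV⁻¹y)`. Taking `x = eᵢ` and `y = 𝟏` gives
`1 ≤ Vᵢᵢ · 𝟏ᵀV⁻¹𝟏`.
-/

open Matrix

namespace Matrix.PosDef

variable {n : Type*} [Fintype n] [DecidableEq n] {V : Matrix n n ℝ}

theorem mulVec_inv_mulVec (hV : V.PosDef) (y : n → ℝ) : V *ᵥ (V⁻¹ *ᵥ y) = y := by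
  rw [mulVec_mulVec, mul_nonsing_inv _ (isUnit_iff_isUnit_det _ |>.mp hV.isUnit), one_mulVec]

theorem sq_dotProduct_le_mul (hV : V.PosDef) (x y : n → ℝ) :
    (x ⬝ᵥ y) ^ 2 ≤ (x ⬝ᵥ V *ᵥ x) * (y ⬝ᵥ V⁻¹ *ᵥ y) := by
  set w := V⁻¹ *ᵥ y
  have hVw : V *ᵥ w = y := hV.mulVec_inv_mulVec y
  have hsymm : w ⬝ᵥ V *ᵥ x = x ⬝ᵥ y := by
    rw [dotProduct_mulVec, ← mulVec_transpose, (isHermitian_iff_isSymm.mp hV.isHermitian).eq, hVw,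
      dotProduct_comm]
  have hquad : ∀ t : ℝ, 0 ≤ (y ⬝ᵥ w) * (t * t) + (-2 * (x ⬝ᵥ y)) * t + x ⬝ᵥ V *ᵥ x := by
    intro t
    have hnonneg := hV.posSemidef.dotProduct_mulVec_nonneg (x - t • w)
    simp only [star_trivial, mulVec_sub, mulVec_smul, hVw, sub_dotProduct, dotProduct_sub,
      smul_dotProduct, dotProduct_smul, hsymm, smul_eq_mul] at hnonneg
    rw [dotProduct_comm w y] at hnonneg
    linarith
  have hdiscrim := discrim_le_zero hquad
  rw [discrim] at hdiscrim
  nlinarith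

end Matrix.PosDef

theorem optimal_damping_not_worse_than_diagonal_general
    (L : ℕ)
    (V : Matrix (Fin L) (Fin L) ℝ) (hV : V.PosDef)
    (i : Fin L) :
    1 / dotProduct (fun _ => (1 : ℝ)) (V⁻¹ *ᵥ (fun _ => (1 : ℝ))) ≤ V i i := by
  set q := dotProduct (fun _ => (1 : ℝ)) (V⁻¹ *ᵥ (fun _ => (1 : ℝ)))
  have hcs : 1 ≤ V i i * q := by
    simpa [single_dotProduct, mulVec_single] using
      hV.sq_dotProduct_le_mul (Pi.single i 1) (fun _ => 1)
  have hq : 0 < q := pos_of_mul_pos_right (one_pos.trans_le hcs) hV.diag_pos.le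
  exact (div_le_iff₀ hq).mpr hcs

/-- for a symmetric positive definite `V` and the all-ones vector `𝟏`,
`1/(𝟏ᵀ V⁻¹ 𝟏) ≤ V_{ii}` for every index `i`. -/
theorem optimal_damping_not_worse_than_diagonal
    (L : ℕ) (hL : 0 < L)
    (V : Matrix (Fin L) (Fin L) ℝ) (hsym : V.IsSymm) (hV : V.PosDef)
    (i : Fin L) :
    1 / dotProduct (fun _ => (1 : ℝ)) (V⁻¹ *ᵥ (fun _ => (1 : ℝ))) ≤ V i i :=
  optimal_damping_not_worse_than_diagonal_general L V hV i
end

section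
/- Let (Ω, 𝔉, ℙ) be a probability space and X, N : Ω → ℝ square-integrable random variables. Set R = X + N and let X̂ = E[X | σ(R)] be the conditional expectation of X given the σ-algebra generated by R. Then E[(X̂ − X)·N] = E[(X̂ − X)²]; i.e., the correlation between the MMSE estimation error and the additive noise equals the mean-square error. -/
/-!
Writing `N = R - X` splits `(X̂ - X) N` as `(X̂ - X)(R - X̂) + (X̂ - X)²`. The factor `R - X̂` is
`σ(R)`-measurable and square-integrable, and the estimation error `X̂ - X` is orthogonal in `L²` to
every such variable (pull-out property plus the tower property), so the first term has mean zero.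
-/

namespace MeasureTheory

variable {Ω : Type*} {m m₀ : MeasurableSpace Ω} {μ : Measure Ω}

theorem integral_mul_condExp_of_stronglyMeasurable (hm : m ≤ m₀) [SigmaFinite (μ.trim hm)]
    {f g : Ω → ℝ} (hg : StronglyMeasurable[m] g) (hgf : Integrable (g * f) μ)
    (hf : Integrable f μ) :
    ∫ ω, g ω * μ[f|m] ω ∂μ = ∫ ω, g ω * f ω ∂μ := calc
  ∫ ω, g ω * μ[f|m] ω ∂μ = ∫ ω, μ[g * f|m] ω ∂μ :=
    integral_congr_ae (condExp_mul_of_stronglyMeasurable_left hg hgf hf).symm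
  _ = ∫ ω, g ω * f ω ∂μ := integral_condExp hm

theorem integral_condExp_sub_mul_eq_zero [IsFiniteMeasure μ] (hm : m ≤ m₀)
    {f g : Ω → ℝ} (hf : MemLp f 2 μ) (hg : MemLp g 2 μ) (hgm : StronglyMeasurable[m] g) :
    ∫ ω, (μ[f|m] ω - f ω) * g ω ∂μ = 0 := by
  have hgf : Integrable (g * f) μ := hg.integrable_mul hf
  have hgf' : Integrable (g * μ[f|m]) μ := hg.integrable_mul (hf.condExp one_le_two)
  calc ∫ ω, (μ[f|m] ω - f ω) * g ω ∂μ
      = ∫ ω, ((g * μ[f|m]) ω - (g * f) ω) ∂μ :=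
        integral_congr_ae (.of_forall fun ω => by simp only [Pi.mul_apply]; ring)
    _ = ∫ ω, (g * μ[f|m]) ω ∂μ - ∫ ω, (g * f) ω ∂μ := integral_sub hgf' hgf
    _ = 0 := sub_eq_zero.mpr <|
        integral_mul_condExp_of_stronglyMeasurable hm hgm hgf (hf.integrable one_le_two)

end MeasureTheory

open MeasureTheory ProbabilityTheory

/-- for square-integrable `X, N` with `R = X + N` and
`X̂ = E[X | σ(R)]`, one has `E[(X̂ - X)·N] = E[(X̂ - X)²]`. -/
theorem mmse_error_noise_correlation
    {Ω : Type*} [MeasureSpace Ω] (hP : IsProbabilityMeasure (ℙ : Measure Ω))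
    (X N : Ω → ℝ) (hXm : Measurable X) (hNm : Measurable N)
    (hX2 : MemLp X 2 (ℙ : Measure Ω)) (hN2 : MemLp N 2 (ℙ : Measure Ω))
    (R : Ω → ℝ) (hR : R = X + N)
    (Xhat : Ω → ℝ)
    (hXhat : Xhat = (ℙ : Measure Ω)[X | MeasurableSpace.comap R inferInstance]) :
    ∫ ω, (Xhat ω - X ω) * N ω ∂(ℙ : Measure Ω)
      = ∫ ω, (Xhat ω - X ω) ^ 2 ∂(ℙ : Measure Ω) := by
  have hm : MeasurableSpace.comap R inferInstance ≤ ‹MeasureSpace Ω›.toMeasurableSpace :=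
    (hR ▸ hXm.add hNm).comap_le
  have hXhat2 : MemLp Xhat 2 ℙ := hXhat ▸ hX2.condExp one_le_two
  have hE2 : MemLp (Xhat - X) 2 ℙ := hXhat2.sub hX2
  have hZ2 : MemLp (R - Xhat) 2 ℙ := (hR ▸ hX2.add hN2).sub hXhat2
  have hZm : StronglyMeasurable[MeasurableSpace.comap R inferInstance] (R - Xhat) :=
    (comap_measurable R).stronglyMeasurable.sub (hXhat ▸ stronglyMeasurable_condExp)
  have h_orth : ∫ ω, ((Xhat - X) * (R - Xhat)) ω = 0 := by
    subst hXhat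
    exact integral_condExp_sub_mul_eq_zero hm hX2 hZ2 hZm
  calc ∫ ω, (Xhat ω - X ω) * N ω
      = ∫ ω, (((Xhat - X) * (R - Xhat)) ω + (Xhat - X) ω ^ 2) :=
        integral_congr_ae (.of_forall fun ω => by
          simp only [hR, Pi.add_apply, Pi.sub_apply, Pi.mul_apply]; ring)
    _ = ∫ ω, (Xhat ω - X ω) ^ 2 := by
        rw [integral_add (hE2.integrable_mul hZ2) hE2.integrable_sq, h_orth, zero_add]
        rfl
end

section
/- Let (Ω, 𝔉, ℙ) be a probability space and X, N : Ω → ℝ square-integrable random variables. Set R = X + N, X̂ = E[X | σ(R)], v = E[N²], and mse = E[(X̂ − X)²]. Assume v > 0 and ε := 1 − mse/v ≠ 0, and define the orthogonalized estimator φ(R) = (1/ε)(X̂ + (ε − 1) R). Then E[(φ(R) − X)·N] = 0; i.e., the error of the orthogonalized (divergence-free) estimator is uncorrelated with the noise. -/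
open MeasureTheory ProbabilityTheory

/-!
Conditional expectation is the orthogonal projection of `L²` onto the `σ(R)`-measurable
functions, so the error `X̂ - X` is orthogonal to every `σ(R)`-measurable `L²` variable.
Writing `N = (R - X̂) + (X̂ - X)` with `R - X̂` measurable for `σ(R)` gives
`E[(X̂ - X) N] = mse`. Since `φ - X = ε⁻¹ (X̂ - X) + (1 - ε⁻¹) N`, this yields
`E[(φ - X) N] = (mse - (1 - ε) v) / ε`, which vanishes by the choice of `ε`.
-/

section ConditionalExpectationL2

variable {α : Type*} {m m₀ : MeasurableSpace α} {μ : Measure α} [IsFiniteMeasure μ]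

theorem integral_mul_condExp_sub_eq_zero (hm : m ≤ m₀) {Z f : α → ℝ}
    (hZm : StronglyMeasurable[m] Z) (hZ : MemLp Z 2 μ) (hf : MemLp f 2 μ) :
    ∫ x, Z x * (μ[f|m] x - f x) ∂μ = 0 := by
  have := isFiniteMeasure_trim (μ := μ) hm
  have hZf : Integrable (fun x => Z x * f x) μ := hZ.integrable_mul hf
  have hZf' : Integrable (fun x => Z x * μ[f|m] x) μ := hZ.integrable_mul (hf.condExp one_le_two)
  have pull_out : ∫ x, Z x * μ[f|m] x ∂μ = ∫ x, Z x * f x ∂μ :=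
    calc ∫ x, Z x * μ[f|m] x ∂μ = ∫ x, μ[Z * f|m] x ∂μ :=
          integral_congr_ae (condExp_mul_of_stronglyMeasurable_left hZm hZf
            (hf.integrable one_le_two)).symm
      _ = ∫ x, Z x * f x ∂μ := integral_condExp hm
  simp_rw [mul_sub]
  rw [integral_sub hZf' hZf, pull_out, sub_self]

theorem integral_condExp_sub_mul_sub_eq_integral_sq (hm : m ≤ m₀) {Y f : α → ℝ}
    (hYm : StronglyMeasurable[m] Y) (hY : MemLp Y 2 μ) (hf : MemLp f 2 μ) :
    ∫ x, (μ[f|m] x - f x) * (Y x - f x) ∂μ = ∫ x, (μ[f|m] x - f x) ^ 2 ∂μ := by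
  have hf' : MemLp (μ[f|m]) 2 μ := hf.condExp one_le_two
  have orthogonal : ∫ x, (Y x - μ[f|m] x) * (μ[f|m] x - f x) ∂μ = 0 :=
    integral_mul_condExp_sub_eq_zero hm (hYm.sub stronglyMeasurable_condExp) (hY.sub hf') hf
  have split : ∀ x, (μ[f|m] x - f x) * (Y x - f x) =
      (Y x - μ[f|m] x) * (μ[f|m] x - f x) + (μ[f|m] x - f x) ^ 2 := fun x => by ring
  have hint : Integrable (fun x => (Y x - μ[f|m] x) * (μ[f|m] x - f x)) μ :=
    (hY.sub hf').integrable_mul (hf'.sub hf)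
  have hsq : Integrable (fun x => (μ[f|m] x - f x) ^ 2) μ := (hf'.sub hf).integrable_sq
  simp_rw [split]
  rw [integral_add hint hsq, orthogonal, zero_add]

end ConditionalExpectationL2

/-- with `R = X + N`, `X̂ = E[X | σ(R)]`, `v = E[N²] > 0`,
`mse = E[(X̂ - X)²]`, `ε = 1 - mse/v ≠ 0`, the orthogonalized estimator
`φ(R) = (1/ε)(X̂ + (ε - 1)R)` satisfies `E[(φ(R) - X)·N] = 0`. -/
theorem orthogonalized_estimator_error_uncorrelated_with_noise
    {Ω : Type*} [MeasureSpace Ω] (hP : IsProbabilityMeasure (ℙ : Measure Ω))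
    (X N : Ω → ℝ) (hXm : Measurable X) (hNm : Measurable N)
    (hX2 : MemLp X 2 (ℙ : Measure Ω)) (hN2 : MemLp N 2 (ℙ : Measure Ω))
    (R : Ω → ℝ) (hR : R = X + N)
    (Xhat : Ω → ℝ)
    (hXhat : Xhat = (ℙ : Measure Ω)[X | MeasurableSpace.comap R inferInstance])
    (v : ℝ) (hv : v = ∫ ω, N ω ^ 2 ∂(ℙ : Measure Ω)) (hv0 : 0 < v)
    (mse : ℝ) (hmse : mse = ∫ ω, (Xhat ω - X ω) ^ 2 ∂(ℙ : Measure Ω))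
    (ε : ℝ) (hε : ε = 1 - mse / v) (hε0 : ε ≠ 0)
    (φ : Ω → ℝ) (hφ : φ = fun ω => (1 / ε) * (Xhat ω + (ε - 1) * R ω)) :
    ∫ ω, (φ ω - X ω) * N ω ∂(ℙ : Measure Ω) = 0 := by
  have hN : N = R - X := by rw [hR, add_sub_cancel_left]
  have hm : MeasurableSpace.comap R inferInstance ≤ ‹MeasureSpace Ω›.toMeasurableSpace :=
    (hR ▸ hXm.add hNm : Measurable R).comap_le
  have hRm : StronglyMeasurable[MeasurableSpace.comap R inferInstance] R :=
    (comap_measurable R).stronglyMeasurable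
  have hcross : ∫ ω, (Xhat ω - X ω) * N ω = mse := by
    rw [hmse, hXhat, hN]
    exact integral_condExp_sub_mul_sub_eq_integral_sq hm hRm (hR ▸ hX2.add hN2) hX2
  have hsplit : ∀ ω, (φ ω - X ω) * N ω =
      1 / ε * ((Xhat ω - X ω) * N ω) + (ε - 1) / ε * N ω ^ 2 := fun ω => by
    simp only [hφ, hR, Pi.add_apply]
    field_simp
    ring
  have hcross_int : Integrable (fun ω => (Xhat ω - X ω) * N ω) :=
    ((hXhat ▸ hX2.condExp one_le_two).sub hX2).integrable_mul hN2
  simp_rw [hsplit]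
  rw [integral_add (hcross_int.const_mul _) (hN2.integrable_sq.const_mul _),
    integral_const_mul, integral_const_mul, hcross, ← hv, hε]
  rw [hε] at hε0
  field_simp
  ring
end
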